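/- Let H : Δ^d → ℝ be a generalized entropy satisfying assumptions A.1–A.3 with ∂(−H)(p) ≠ ∅ for every p ∈ Δ^d (equivalently, the Fenchel-Young loss L_{−H} has the separation margin property), and suppose H is twice-differentiable on the simplex. Then for arbitrary j ≠ k, margin(L_{−H}) = ∇_j H(e_k) − ∇_k H(e_k). In particular, if H is separable, H(p) = Σ_i h(p_i) with h : [0,1] → ℝ_+ concave, twice differentiable, and h(0) = h(1) = 0, then margin(L_{−H}) = h'(0) − h'(1) = −∫_0^1 h''(t) dt. -/

import Mathlib

/-!
STATEMENT 16: Margin computation. For a generalized entropy H satisfying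
A.1–A.3, with everywhere-nonempty subdifferential on the simplex (equivalently,
L_{−H} has the separation margin property) and twice-differentiable on the
simplex (gradient `gradH`, itself differentiable there), the margin of L_{−H}
is ∇_j H(e_k) − ∇_k H(e_k) for arbitrary j ≠ k.  If moreover H is separable,
H(p) = Σ_i h(p_i) with h : [0,1] → ℝ_+ concave, twice differentiable,
h(0) = h(1) = 0, then the margin equals h'(0) − h'(1) = −∫₀¹ h''(t) dt.
-/

noncomputable section

/-- Dot product on ℝ^d. -/
def dot {d : ℕ} (x y : Fin d → ℝ) : ℝ := ∑ i, x i * y i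

/-- The standard basis vector e_k. -/
def vertex {d : ℕ} (k : Fin d) : Fin d → ℝ := fun j => if j = k then 1 else 0

/-- Subdifferential of Ω := −H + I_Δ at a point q of the simplex. -/
def subdiffNegH {d : ℕ} (H : (Fin d → ℝ) → ℝ) (q : Fin d → ℝ) :
    Set (Fin d → ℝ) :=
  {θ | ∀ p ∈ stdSimplex ℝ (Fin d), -H q + dot θ (p - q) ≤ -H p}

/-- Conjugate (−H)*(θ) = sup_{p ∈ Δ} ⟨θ, p⟩ + H(p). -/
def conjNegH {d : ℕ} (H : (Fin d → ℝ) → ℝ) (θ : Fin d → ℝ) : ℝ :=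
  sSup ((fun p => dot θ p + H p) '' stdSimplex ℝ (Fin d))

/-- Separation margin property with margin m. -/
def marginProp {d : ℕ} (H : (Fin d → ℝ) → ℝ) (m : ℝ) : Prop :=
  ∀ (θ : Fin d → ℝ) (k : Fin d),
    (∀ j, j ≠ k → θ j + m ≤ θ k) → conjNegH H θ - θ k = 0

open Set Filter Topology

namespace FY16

lemma sum_two {d : ℕ} (F : Fin d → ℝ) (j k : Fin d) (A B : ℝ)
    (hF : ∀ i, F i = (if i = j then A else 0) + (if i = k then B else 0)) :
    ∑ i, F i = A + B := by
  simp [hF, Finset.sum_add_distrib]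

lemma vertex_mem {d : ℕ} (k : Fin d) : vertex k ∈ stdSimplex ℝ (Fin d) := by
  constructor
  · intro i; unfold vertex; split <;> norm_num
  · simp [vertex]

def segf {d : ℕ} (j k : Fin d) (t : ℝ) : Fin d → ℝ := vertex k + t • (vertex j - vertex k)

lemma segf_eq {d : ℕ} (j k : Fin d) (t : ℝ) :
    segf j k t = (1 - t) • vertex k + t • vertex j := by
  unfold segf; module

lemma segf_apply {d : ℕ} {j k : Fin d} (hjk : j ≠ k) (t : ℝ) (i : Fin d) :
    segf j k t i = if i = j then t else if i = k then 1 - t else 0 := by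
  simp only [segf, Pi.add_apply, Pi.smul_apply, Pi.sub_apply, smul_eq_mul, vertex]
  by_cases hij : i = j <;> by_cases hik : i = k <;> simp_all <;> ring

lemma segf_mem {d : ℕ} (j k : Fin d) {t : ℝ} (ht : t ∈ Icc (0:ℝ) 1) :
    segf j k t ∈ stdSimplex ℝ (Fin d) := by
  rw [segf_eq]
  exact (convex_stdSimplex ℝ (Fin d)) (vertex_mem k) (vertex_mem j)
    (by linarith [ht.2]) ht.1 (by ring)

lemma segf_zero {d : ℕ} (j k : Fin d) : segf j k 0 = vertex k := by
  unfold segf; simp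

lemma tangent {E : Type*} [NormedAddCommGroup E] [NormedSpace ℝ E] {S : Set E}
    {H : E → ℝ} (hconc : ConcaveOn ℝ S H) {q p : E} {L : E →L[ℝ] ℝ}
    (hq : q ∈ S) (hp : p ∈ S) (hL : HasFDerivAt H L q) :
    H p ≤ H q + L (p - q) := by
  have hline : HasDerivAt (fun s : ℝ => q + s • (p - q)) (p - q) 0 := by
    simpa using ((hasDerivAt_id (0:ℝ)).smul_const (p - q)).const_add q
  have hL' : HasFDerivAt H L (q + (0:ℝ) • (p - q)) := by
    rw [show q + (0:ℝ) • (p - q) = q by simp]; exact hL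
  have hφ : HasDerivAt (fun t : ℝ => H (q + t • (p - q))) (L (p - q)) 0 :=
    hL'.comp_hasDerivAt 0 hline
  have key : ∀ t ∈ Ioc (0:ℝ) 1,
      H p - H q ≤ slope (fun t : ℝ => H (q + t • (p - q))) 0 t := by
    intro t ht
    have hcomb : q + t • (p - q) = (1 - t) • q + t • p := by module
    have h2 : (1 - t) * H q + t * H p ≤ H (q + t • (p - q)) := by
      rw [hcomb]
      simpa [smul_eq_mul] using
        hconc.2 hq hp (by linarith [ht.2] : (0:ℝ) ≤ 1 - t) ht.1.le (by ring)
    rw [slope_def_field]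
    rw [sub_zero, le_div_iff₀ ht.1]
    simp only [zero_smul, add_zero]
    nlinarith [ht.1]
  have hslope := (hasDerivAt_iff_tendsto_slope.mp hφ).mono_left
      (nhdsWithin_mono 0 (fun x (hx : x ∈ Ioi 0) => ne_of_gt hx))
  have : H p - H q ≤ L (p - q) :=
    ge_of_tendsto hslope (Filter.eventually_of_mem (Ioc_mem_nhdsGT one_pos) key)
  linarith

lemma deriv_le_of_slope_le {f : ℝ → ℝ} {a m : ℝ} (hf : HasDerivAt f a 0)
    (h0 : f 0 = 0) (hb : ∀ t ∈ Ioc (0:ℝ) 1, f t ≤ m * t) : a ≤ m := by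
  have hslope := (hasDerivAt_iff_tendsto_slope.mp hf).mono_left
      (nhdsWithin_mono 0 (fun x (hx : x ∈ Ioi 0) => ne_of_gt hx))
  refine le_of_tendsto hslope
    (Filter.eventually_of_mem (Ioc_mem_nhdsGT one_pos) ?_)
  intro t ht
  rw [slope_def_field, h0, sub_zero, sub_zero, div_le_iff₀ ht.1]
  exact hb t ht

lemma deriv_nonpos_of_antitoneOn {g : ℝ → ℝ} {x : ℝ} (hg : AntitoneOn g (Icc 0 1))
    (hx : x ∈ Ioo (0:ℝ) 1) (hd : DifferentiableAt ℝ g x) : deriv g x ≤ 0 := by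
  have hslope := (hasDerivAt_iff_tendsto_slope.mp hd.hasDerivAt).mono_left
      (nhdsWithin_mono x (fun y (hy : y ∈ Ioi x) => ne_of_gt hy))
  refine le_of_tendsto hslope
    (Filter.eventually_of_mem (Ioc_mem_nhdsGT_of_mem ⟨le_refl x, hx.2⟩) ?_)
  intro t ht
  rw [slope_def_field]
  apply div_nonpos_of_nonpos_of_nonneg
  · have := hg ⟨hx.1.le, hx.2.le⟩ ⟨(hx.1.trans ht.1).le, ht.2⟩ ht.1.le
    linarith
  · linarith [ht.1]

lemma hasDerivAt_unique_on_Icc {f g : ℝ → ℝ} {a b : ℝ}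
    (hfg : ∀ t ∈ Icc (0:ℝ) 1, f t = g t) (hf : HasDerivAt f a 0) (hg : HasDerivAt g b 0) :
    a = b := by
  have h0 : (0:ℝ) ∈ Icc (0:ℝ) 1 := by norm_num
  have hg' : HasDerivWithinAt g a (Icc 0 1) 0 :=
    (hf.hasDerivWithinAt (s := Icc 0 1)).congr (fun t ht => (hfg t ht).symm) (hfg 0 h0).symm
  have hu := (uniqueDiffOn_Icc one_pos) 0 h0
  rw [← hg'.derivWithin hu, ← (hg.hasDerivWithinAt (s := Icc 0 1)).derivWithin hu]

lemma exists_perm {d : ℕ} {j k j' k' : Fin d} (hjk : j ≠ k) (hjk' : j' ≠ k') :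
    ∃ τ : Equiv.Perm (Fin d), τ k = k' ∧ τ j = j' := by
  classical
  set τ₁ := Equiv.swap k k' with hτ₁
  have hj₁k' : τ₁ j ≠ k' := by
    intro hcon
    exact hjk (τ₁.injective (hcon.trans (Equiv.swap_apply_left k k').symm))
  refine ⟨τ₁.trans (Equiv.swap (τ₁ j) j'), ?_, ?_⟩
  · rw [Equiv.trans_apply, Equiv.swap_apply_left,
      Equiv.swap_apply_of_ne_of_ne (Ne.symm hj₁k') (Ne.symm hjk')]
  · rw [Equiv.trans_apply, Equiv.swap_apply_left]

lemma Lapp {d : ℕ} (c : Fin d → ℝ) (v : Fin d → ℝ) :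
    (∑ i, c i • (ContinuousLinearMap.proj i : (Fin d → ℝ) →L[ℝ] ℝ)) v = ∑ i, c i * v i := by
  simp [ContinuousLinearMap.sum_apply, ContinuousLinearMap.smul_apply]

lemma hasDerivAt_seg {d : ℕ} {H : (Fin d → ℝ) → ℝ} {gradH : (Fin d → ℝ) → (Fin d → ℝ)}
    {j k : Fin d} (hjk : j ≠ k)
    (hdiff : HasFDerivAt H
      (∑ i, gradH (vertex k) i • (ContinuousLinearMap.proj i : (Fin d → ℝ) →L[ℝ] ℝ))
      (vertex k)) :
    HasDerivAt (fun t => H (segf j k t)) (gradH (vertex k) j - gradH (vertex k) k) 0 := by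
  have hline : HasDerivAt (fun t : ℝ => vertex k + t • (vertex j - vertex k))
      (vertex j - vertex k) 0 := by
    simpa using ((hasDerivAt_id (0:ℝ)).smul_const (vertex j - vertex k)).const_add (vertex k)
  have hL' : HasFDerivAt H
      (∑ i, gradH (vertex k) i • (ContinuousLinearMap.proj i : (Fin d → ℝ) →L[ℝ] ℝ))
      (vertex k + (0:ℝ) • (vertex j - vertex k)) := by
    rw [show vertex k + (0:ℝ) • (vertex j - vertex k) = vertex k by simp]; exact hdiff
  have hcomp := hL'.comp_hasDerivAt 0 hline
  have hval : (∑ i, gradH (vertex k) i • (ContinuousLinearMap.proj i : (Fin d → ℝ) →L[ℝ] ℝ))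
      (vertex j - vertex k) = gradH (vertex k) j - gradH (vertex k) k := by
    rw [Lapp]
    rw [sum_two (fun i => gradH (vertex k) i * (vertex j - vertex k) i) j k
      (gradH (vertex k) j) (-(gradH (vertex k) k)) ?_]
    · ring
    · intro i
      by_cases hij : i = j <;> by_cases hik : i = k <;> simp_all [vertex] <;> ring
  rw [hval] at hcomp
  exact hcomp

end FY16

open FY16

theorem fy_statement_16 {d : ℕ} (hd : 2 ≤ d) (H : (Fin d → ℝ) → ℝ)
    (hA1 : ∀ k : Fin d, H (vertex k) = 0)
    (hA2 : StrictConcaveOn ℝ (stdSimplex ℝ (Fin d)) H)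
    (hA3 : ∀ σ : Equiv.Perm (Fin d), ∀ p ∈ stdSimplex ℝ (Fin d),
      H (fun i => p (σ i)) = H p)
    (hsubdiff : ∀ p ∈ stdSimplex ℝ (Fin d), (subdiffNegH H p).Nonempty)
    (gradH : (Fin d → ℝ) → (Fin d → ℝ))
    (hdiff : ∀ p ∈ stdSimplex ℝ (Fin d),
      HasFDerivAt H
        (∑ i, gradH p i • (ContinuousLinearMap.proj i : (Fin d → ℝ) →L[ℝ] ℝ)) p)
    (hdiff2 : ∀ p ∈ stdSimplex ℝ (Fin d), DifferentiableAt ℝ gradH p) :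
    (∀ j k : Fin d, j ≠ k →
      IsLeast {m : ℝ | 0 < m ∧ marginProp H m}
        (gradH (vertex k) j - gradH (vertex k) k)) ∧
    (∀ h : ℝ → ℝ, ConcaveOn ℝ (Set.Icc (0 : ℝ) 1) h →
      (∀ t ∈ Set.Icc (0 : ℝ) 1, 0 ≤ h t) → h 0 = 0 → h 1 = 0 →
      (∀ t ∈ Set.Icc (0 : ℝ) 1,
        DifferentiableAt ℝ h t ∧ DifferentiableAt ℝ (deriv h) t) →
      (∀ p ∈ stdSimplex ℝ (Fin d), H p = ∑ i, h (p i)) →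
      IsLeast {m : ℝ | 0 < m ∧ marginProp H m} (deriv h 0 - deriv h 1) ∧
      deriv h 0 - deriv h 1 = -∫ t in (0 : ℝ)..1, deriv (deriv h) t) := by
  classical
  have hderseg : ∀ (j k : Fin d), j ≠ k →
      HasDerivAt (fun t => H (segf j k t)) (gradH (vertex k) j - gradH (vertex k) k) 0 :=
    fun j k hjk => hasDerivAt_seg hjk (hdiff _ (vertex_mem k))
  have key : ∀ j k : Fin d, j ≠ k →
      IsLeast {m : ℝ | 0 < m ∧ marginProp H m} (gradH (vertex k) j - gradH (vertex k) k) := by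
    intro j k hjk
    set M := gradH (vertex k) j - gradH (vertex k) k with hM
    -- symmetry of the gradient differences
    have hsym : ∀ j' k' : Fin d, j' ≠ k' →
        gradH (vertex k') j' - gradH (vertex k') k' = M := by
      intro j' k' hjk'
      obtain ⟨τ, hτk, hτj⟩ := exists_perm hjk hjk'
      have heq : ∀ t ∈ Set.Icc (0:ℝ) 1, H (segf j' k' t) = H (segf j k t) := by
        intro t ht
        rw [← hA3 τ.symm (segf j k t) (segf_mem j k ht)]
        congr 1
        funext i
        rw [segf_apply hjk', segf_apply hjk]
        simp only [Equiv.symm_apply_eq, hτj, hτk]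
      exact hasDerivAt_unique_on_Icc heq (hderseg j' k' hjk') (hderseg j k hjk)
    -- tangent upper bound at any vertex
    have hub : ∀ (k'' : Fin d), ∀ p ∈ stdSimplex ℝ (Fin d),
        H p ≤ ∑ i, p i * (if i = k'' then 0 else M) := by
      intro k'' p hp
      have htang := tangent hA2.concaveOn (vertex_mem k'') hp (hdiff _ (vertex_mem k''))
      rw [hA1 k'', zero_add, Lapp] at htang
      have hp1 : (∑ i, p i) = 1 := hp.2
      have hfin : ∑ i, gradH (vertex k'') i * (p - vertex k'') i
          = ∑ i, p i * (if i = k'' then 0 else M) := by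
        have step : ∀ i : Fin d, p i * (if i = k'' then 0 else M)
            = gradH (vertex k'') i * p i - gradH (vertex k'') k'' * p i := by
          intro i
          by_cases hik : i = k''
          · subst hik; simp
          · rw [if_neg hik, ← hsym i k'' hik]; ring
        calc ∑ i, gradH (vertex k'') i * (p - vertex k'') i
            = ∑ i, (gradH (vertex k'') i * p i - gradH (vertex k'') i * vertex k'' i) := by
              apply Finset.sum_congr rfl; intro i _
              simp only [Pi.sub_apply]; ring
          _ = (∑ i, gradH (vertex k'') i * p i) - gradH (vertex k'') k'' := by
              rw [Finset.sum_sub_distrib]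
              congr 1
              simp [vertex, mul_ite]
          _ = (∑ i, gradH (vertex k'') i * p i) - gradH (vertex k'') k'' * ∑ i, p i := by
              rw [hp1, mul_one]
          _ = ∑ i, (gradH (vertex k'') i * p i - gradH (vertex k'') k'' * p i) := by
              rw [Finset.sum_sub_distrib, Finset.mul_sum]
          _ = ∑ i, p i * (if i = k'' then 0 else M) := by
              apply Finset.sum_congr rfl; intro i _; rw [step]
      rw [hfin] at htang
      exact htang
    -- positivity
    have hMpos : 0 < M := by
      have hhalf : segf j k (1/2 : ℝ) ∈ stdSimplex ℝ (Fin d) := segf_mem j k (by norm_num)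
      have hne : vertex k ≠ vertex j := by
        intro hcon
        have := congrFun hcon k
        simp [vertex, Ne.symm hjk] at this
      have hpos : 0 < H (segf j k (1/2 : ℝ)) := by
        have h2 := hA2.2 (vertex_mem k) (vertex_mem j) hne (by norm_num : (0:ℝ) < 1/2)
          (by norm_num : (0:ℝ) < 1/2) (by norm_num)
        rw [hA1, hA1] at h2
        have hrw : ((1:ℝ) - 1/2) • (vertex k : Fin d → ℝ) + (1/2 : ℝ) • vertex j
            = (1/2 : ℝ) • (vertex k : Fin d → ℝ) + (1/2 : ℝ) • vertex j := by norm_num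
        rw [segf_eq, hrw]
        simpa using h2
      have hle := hub k _ hhalf
      have hsum := sum_two (fun i => segf j k (1/2:ℝ) i * (if i = k then 0 else M)) j k
          (1/2 * M) 0 ?_
      · rw [hsum] at hle
        linarith
      · intro i
        show segf j k (1/2:ℝ) i * (if i = k then 0 else M)
            = (if i = j then 1/2 * M else 0) + (if i = k then 0 else 0)
        rw [segf_apply hjk]
        rcases eq_or_ne i j with hij | hij
        · subst hij
          rw [if_pos rfl, if_pos rfl, if_neg hjk, if_neg hjk]
          ring
        · rw [if_neg hij, if_neg hij, zero_add, ite_self]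
          rcases eq_or_ne i k with hik | hik
          · rw [if_pos hik, if_pos hik, mul_zero]
          · rw [if_neg hik, if_neg hik, zero_mul]
    -- margin property holds with margin M
    have hmar : marginProp H M := by
      intro θ k'' hsep
      have hubd : ∀ a ∈ (fun p => dot θ p + H p) '' stdSimplex ℝ (Fin d), a ≤ θ k'' := by
        rintro a ⟨p, hp, rfl⟩
        have h1 := hub k'' p hp
        have h2 : dot θ p + ∑ i, p i * (if i = k'' then 0 else M) ≤ θ k'' := by
          unfold dot
          rw [← Finset.sum_add_distrib]
          calc ∑ i, (θ i * p i + p i * (if i = k'' then 0 else M))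
              ≤ ∑ i, p i * θ k'' := by
                apply Finset.sum_le_sum
                intro i _
                have hcoef : θ i + (if i = k'' then 0 else M) ≤ θ k'' := by
                  by_cases hik : i = k''
                  · subst hik; simp
                  · rw [if_neg hik]; exact hsep i hik
                calc θ i * p i + p i * (if i = k'' then 0 else M)
                    = p i * (θ i + (if i = k'' then 0 else M)) := by ring
                  _ ≤ p i * θ k'' := mul_le_mul_of_nonneg_left hcoef (hp.1 i)
            _ = θ k'' := by rw [← Finset.sum_mul, hp.2, one_mul]
        show dot θ p + H p ≤ θ k''
        linarith
      have hmem : θ k'' ∈ (fun p => dot θ p + H p) '' stdSimplex ℝ (Fin d) := by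
        refine ⟨vertex k'', vertex_mem k'', ?_⟩
        simp only [hA1, add_zero]
        simp [dot, vertex, mul_ite]
      have hcs : conjNegH H θ = θ k'' := by
        unfold conjNegH
        exact le_antisymm (csSup_le ⟨θ k'', hmem⟩ hubd)
          (le_csSup ⟨θ k'', fun a ha => hubd a ha⟩ hmem)
      rw [hcs, sub_self]
    refine ⟨⟨hMpos, hmar⟩, ?_⟩
    -- minimality
    rintro m ⟨hm0, hmarm⟩
    set θ : Fin d → ℝ := fun i => if i = k then 0 else -m with hθ
    have hsepθ : ∀ i, i ≠ k → θ i + m ≤ θ k := by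
      intro i hi; simp [hθ, hi]
    have hc0 := hmarm θ k hsepθ
    have hθk : θ k = 0 := by simp [hθ]
    have hbdd : BddAbove ((fun p => dot θ p + H p) '' stdSimplex ℝ (Fin d)) := by
      refine ⟨M, ?_⟩
      rintro a ⟨p, hp, rfl⟩
      have h1 := hub k p hp
      have h2 : dot θ p ≤ 0 := by
        unfold dot
        apply Finset.sum_nonpos
        intro i _
        have hθi : θ i ≤ 0 := by
          by_cases hik : i = k <;> simp [hθ, hik] <;> linarith
        exact mul_nonpos_of_nonpos_of_nonneg hθi (hp.1 i)
      have h3 : ∑ i, p i * (if i = k then 0 else M) ≤ M := by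
        calc ∑ i, p i * (if i = k then 0 else M) ≤ ∑ i, p i * M := by
              apply Finset.sum_le_sum
              intro i _
              refine mul_le_mul_of_nonneg_left ?_ (hp.1 i)
              by_cases hik : i = k <;> simp [hik] <;> linarith [hMpos]
          _ = M := by rw [← Finset.sum_mul, hp.2, one_mul]
      simp only
      linarith
    have hle0 : ∀ p ∈ stdSimplex ℝ (Fin d), dot θ p + H p ≤ 0 := by
      intro p hp
      have h4 : dot θ p + H p ≤ conjNegH H θ := by
        unfold conjNegH
        exact le_csSup hbdd ⟨p, hp, rfl⟩
      linarith
    have hft : ∀ t ∈ Set.Ioc (0:ℝ) 1, H (segf j k t) ≤ m * t := by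
      intro t ht
      have hp := segf_mem j k ⟨ht.1.le, ht.2⟩
      have hle := hle0 _ hp
      have hdot : dot θ (segf j k t) = -(m * t) := by
        show (∑ i, θ i * segf j k t i) = -(m * t)
        have := sum_two (fun i => θ i * segf j k t i) j k (-(m*t)) 0 ?_
        · rw [this, add_zero]
        · intro i
          show (if i = k then (0:ℝ) else -m) * segf j k t i
              = (if i = j then -(m * t) else 0) + (if i = k then 0 else 0)
          rw [segf_apply hjk]
          rcases eq_or_ne i j with hij | hij
          · subst hij
            rw [if_neg hjk, if_pos rfl, if_pos rfl, if_neg hjk, add_zero]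
            ring
          · rw [if_neg hij, if_neg hij, zero_add, ite_self]
            rcases eq_or_ne i k with hik | hik
            · rw [if_pos hik, zero_mul]
            · rw [if_neg hik, if_neg hik, mul_zero]
      rw [hdot] at hle
      linarith
    have hf0 : H (segf j k 0) = 0 := by rw [segf_zero]; exact hA1 k
    exact deriv_le_of_slope_le (hderseg j k hjk) hf0 hft
  refine ⟨key, ?_⟩
  intro h hconc hnn hzero hone htd hsepH
  have h0d : 0 < d := by omega
  have h1d : 1 < d := by omega
  set j₀ : Fin d := ⟨0, h0d⟩ with hj₀
  set k₀ : Fin d := ⟨1, h1d⟩ with hk₀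
  have hjk₀ : j₀ ≠ k₀ := by simp [hj₀, hk₀, Fin.ext_iff]
  -- derivative of t ↦ h t + h (1 - t) at 0
  have hh1 : HasDerivAt h (deriv h 1) ((fun t : ℝ => 1 - t) 0) := by
    simpa using (htd 1 (by norm_num)).1.hasDerivAt
  have hinner : HasDerivAt (fun t : ℝ => 1 - t) (-1) 0 := by
    exact (hasDerivAt_id' (0:ℝ)).const_sub 1
  have hcomp := hh1.comp 0 hinner
  have hf : HasDerivAt (fun t => h t + h (1 - t)) (deriv h 0 - deriv h 1) 0 := by
    have h2 := ((htd 0 (by norm_num)).1.hasDerivAt).add hcomp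
    have h3 : deriv h 0 + deriv h 1 * (-1) = deriv h 0 - deriv h 1 := by ring
    rw [h3] at h2
    exact h2
  have hfg : ∀ t ∈ Set.Icc (0:ℝ) 1,
      (fun t => h t + h (1 - t)) t = (fun t => H (segf j₀ k₀ t)) t := by
    intro t ht
    simp only
    rw [hsepH (segf j₀ k₀ t) (segf_mem j₀ k₀ ht)]
    have := sum_two (fun i => h (segf j₀ k₀ t i)) j₀ k₀ (h t) (h (1 - t)) ?_
    · rw [this]
    · intro i
      show h (segf j₀ k₀ t i) = (if i = j₀ then h t else 0) + (if i = k₀ then h (1 - t) else 0)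
      rw [segf_apply hjk₀]
      rcases eq_or_ne i j₀ with hij | hij
      · subst hij
        rw [if_pos rfl, if_pos rfl, if_neg hjk₀, add_zero]
      · rw [if_neg hij, if_neg hij, zero_add]
        rcases eq_or_ne i k₀ with hik | hik
        · rw [if_pos hik, if_pos hik]
        · rw [if_neg hik, if_neg hik]
          exact hzero
  have hEq : deriv h 0 - deriv h 1 = gradH (vertex k₀) j₀ - gradH (vertex k₀) k₀ :=
    hasDerivAt_unique_on_Icc hfg hf (hderseg j₀ k₀ hjk₀)
  constructor
  · rw [hEq]; exact key j₀ k₀ hjk₀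
  · have hasd2 : ∀ t ∈ Set.uIcc (0:ℝ) 1, HasDerivAt (deriv h) (deriv (deriv h) t) t := by
      intro t ht
      rw [Set.uIcc_of_le zero_le_one] at ht
      exact ((htd t ht).2).hasDerivAt
    have hanti : AntitoneOn (deriv h) (Set.Icc 0 1) :=
      hconc.antitoneOn_deriv (fun t ht => (htd t ht).1)
    have hint : IntervalIntegrable (deriv (deriv h)) MeasureTheory.volume 0 1 := by
      have hcont : ContinuousOn (fun t => -(deriv h t)) (Set.uIcc (0:ℝ) 1) := by
        rw [Set.uIcc_of_le zero_le_one]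
        exact fun t ht => ((htd t ht).2.continuousAt.continuousWithinAt).neg
      have hder : ∀ x ∈ Set.Ioo (min (0:ℝ) 1) (max (0:ℝ) 1),
          HasDerivAt (fun t => -(deriv h t)) (-(deriv (deriv h) x)) x := by
        intro x hx
        rw [min_eq_left zero_le_one, max_eq_right zero_le_one] at hx
        exact ((htd x (Set.Ioo_subset_Icc_self hx)).2.hasDerivAt).neg
      have hnonneg : ∀ x ∈ Set.Ioo (min (0:ℝ) 1) (max (0:ℝ) 1),
          0 ≤ -(deriv (deriv h) x) := by
        intro x hx
        rw [min_eq_left zero_le_one, max_eq_right zero_le_one] at hx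
        have := deriv_nonpos_of_antitoneOn hanti hx (htd x (Set.Ioo_subset_Icc_self hx)).2
        linarith
      have h5 := (intervalIntegral.intervalIntegrable_deriv_of_nonneg hcont hder hnonneg).neg
      have h6 : deriv (deriv h) = -(fun x => -(deriv (deriv h) x)) := by funext x; simp
      rw [h6]
      exact h5
    have hFTC := intervalIntegral.integral_eq_sub_of_hasDerivAt hasd2 hint
    rw [hFTC]
    ring
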